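/- Let $B'$ be a metric space with metric $d'$ and define on equivalence classes $[x,s,t] \in (B' \times \mathbb{R} \times \mathbb{R})/\sim$ (with $(x,s,t)\sim(x',s',t')$ iff $x=x'$, $s-s'=t'-t \in n\mathbb{Z}$) the function $d([x,s,t],[x',s',t']) = \sqrt{d'(x,x')^2 + (s-s')^2 + (t-t')^2}$ computed on the unique representatives with third coordinate in $[0,n)$. Then $d$ is a well-defined metric on the quotient. -/

import Mathlib

/-!
On canonical representatives, `d` is the pullback of the `L²` product metric on
`B' × (ℝ × ℝ)` along the injective map `(x, s, t) ↦ (x, (s, t))`, so the metric axioms are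
inherited. Well-definedness holds because `[0, n)` contains exactly one point of each coset of
`nℤ`, so equivalent canonical representatives have the same `t`, hence the same `s`.
-/

open Set

lemma eq_of_mem_Ico_of_sub_eq_zsmul {α : Type*} [AddCommGroup α] [LinearOrder α]
    [IsOrderedAddMonoid α] [Archimedean α] {p a b c : α} (hb : b ∈ Ico a (a + p))
    (hc : c ∈ Ico a (a + p)) (h : ∃ n : ℤ, c - b = n • p) : b = c := by
  have hp : 0 < p := lt_add_iff_pos_right a |>.mp (hb.1.trans_lt hb.2)
  rw [← (toIcoMod_eq_self hp).2 hb, ← (toIcoMod_eq_self hp).2 hc]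
  exact (toIcoMod_eq_toIcoMod hp).2 h

lemma WithLp.prod_dist_eq_sqrt {α β : Type*} [Dist α] [Dist β] (x y : WithLp 2 (α × β)) :
    dist x y = √(dist x.fst y.fst ^ 2 + dist x.snd y.snd ^ 2) := by
  rw [prod_dist_eq_add (by norm_num), Real.sqrt_eq_rpow]
  norm_num

def toProdL2 {X : Type*} (p : X × ℝ × ℝ) : WithLp 2 (X × WithLp 2 (ℝ × ℝ)) :=
  WithLp.toLp 2 (p.1, WithLp.toLp 2 p.2)

lemma toProdL2_injective {X : Type*} : Function.Injective (toProdL2 (X := X)) := by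
  rintro ⟨x, s⟩ ⟨y, t⟩ h
  simpa [toProdL2] using h

lemma dist_toProdL2 {X : Type*} [Dist X] (p q : X × ℝ × ℝ) :
    dist (toProdL2 p) (toProdL2 q) =
      √(dist p.1 q.1 ^ 2 + (p.2.1 - q.2.1) ^ 2 + (p.2.2 - q.2.2) ^ 2) := by
  rw [WithLp.prod_dist_eq_sqrt, WithLp.prod_dist_eq_sqrt, Real.sq_sqrt (by positivity),
    ← add_assoc]
  simp [toProdL2, Real.dist_eq, sq_abs]

theorem stmt8_general {B' : Type*} [MetricSpace B'] (n : ℕ) :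
    (∀ p q : {p : B' × ℝ × ℝ // p.2.2 ∈ Set.Ico (0 : ℝ) n},
      (p.1.1 = q.1.1 ∧ ∃ r : ℤ, p.1.2.1 - q.1.2.1 = n * r ∧ q.1.2.2 - p.1.2.2 = n * r) →
      p = q) ∧
    (∀ p : {p : B' × ℝ × ℝ // p.2.2 ∈ Set.Ico (0 : ℝ) n},
      Real.sqrt (dist p.1.1 p.1.1 ^ 2 + (p.1.2.1 - p.1.2.1) ^ 2 +
        (p.1.2.2 - p.1.2.2) ^ 2) = 0) ∧
    (∀ p q : {p : B' × ℝ × ℝ // p.2.2 ∈ Set.Ico (0 : ℝ) n},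
      Real.sqrt (dist p.1.1 q.1.1 ^ 2 + (p.1.2.1 - q.1.2.1) ^ 2 + (p.1.2.2 - q.1.2.2) ^ 2) =
      Real.sqrt (dist q.1.1 p.1.1 ^ 2 + (q.1.2.1 - p.1.2.1) ^ 2 + (q.1.2.2 - p.1.2.2) ^ 2)) ∧
    (∀ p q : {p : B' × ℝ × ℝ // p.2.2 ∈ Set.Ico (0 : ℝ) n},
      Real.sqrt (dist p.1.1 q.1.1 ^ 2 + (p.1.2.1 - q.1.2.1) ^ 2 + (p.1.2.2 - q.1.2.2) ^ 2)
        = 0 → p = q) ∧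
    (∀ p q r : {p : B' × ℝ × ℝ // p.2.2 ∈ Set.Ico (0 : ℝ) n},
      Real.sqrt (dist p.1.1 r.1.1 ^ 2 + (p.1.2.1 - r.1.2.1) ^ 2 + (p.1.2.2 - r.1.2.2) ^ 2) ≤
      Real.sqrt (dist p.1.1 q.1.1 ^ 2 + (p.1.2.1 - q.1.2.1) ^ 2 + (p.1.2.2 - q.1.2.2) ^ 2) +
      Real.sqrt (dist q.1.1 r.1.1 ^ 2 + (q.1.2.1 - r.1.2.1) ^ 2 + (q.1.2.2 - r.1.2.2) ^ 2)) := by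
  simp only [← dist_toProdL2]
  refine ⟨?_, fun p ↦ dist_self _, fun p q ↦ dist_comm _ _,
    fun p q h ↦ Subtype.ext (toProdL2_injective (dist_eq_zero.1 h)),
    fun p q r ↦ dist_triangle _ _ _⟩
  rintro ⟨⟨x, s, t⟩, ht⟩ ⟨⟨x', s', t'⟩, ht'⟩ ⟨rfl, r, hs, htt⟩
  dsimp only at ht ht' hs htt
  rw [← zero_add (n : ℝ)] at ht ht'
  obtain rfl : t = t' :=
    eq_of_mem_Ico_of_sub_eq_zsmul ht ht' ⟨r, by rw [htt, zsmul_eq_mul, mul_comm]⟩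
  obtain rfl : s = s' := by linarith
  rfl

/-- On the quotient `(B' × ℝ × ℝ)/∼` (with `(x,s,t) ∼ (x',s',t')` iff
`x = x'`, `s - s' = t' - t ∈ nℤ`), the function
`d([x,s,t],[x',s',t']) = √(d'(x,x')² + (s-s')² + (t-t')²)`, computed on the unique
representatives with third coordinate in `[0,n)`, is a well-defined metric.  We state
this on the set of canonical representatives: equivalent canonical representatives are
equal (well-definedness), and `d` satisfies the metric axioms there. -/
theorem stmt8 {B' : Type*} [MetricSpace B'] (n : ℕ) (hn : 1 ≤ n) :
    (∀ p q : {p : B' × ℝ × ℝ // p.2.2 ∈ Set.Ico (0 : ℝ) n},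
      (p.1.1 = q.1.1 ∧ ∃ r : ℤ, p.1.2.1 - q.1.2.1 = n * r ∧ q.1.2.2 - p.1.2.2 = n * r) →
      p = q) ∧
    (∀ p : {p : B' × ℝ × ℝ // p.2.2 ∈ Set.Ico (0 : ℝ) n},
      Real.sqrt (dist p.1.1 p.1.1 ^ 2 + (p.1.2.1 - p.1.2.1) ^ 2 +
        (p.1.2.2 - p.1.2.2) ^ 2) = 0) ∧
    (∀ p q : {p : B' × ℝ × ℝ // p.2.2 ∈ Set.Ico (0 : ℝ) n},
      Real.sqrt (dist p.1.1 q.1.1 ^ 2 + (p.1.2.1 - q.1.2.1) ^ 2 + (p.1.2.2 - q.1.2.2) ^ 2) =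
      Real.sqrt (dist q.1.1 p.1.1 ^ 2 + (q.1.2.1 - p.1.2.1) ^ 2 + (q.1.2.2 - p.1.2.2) ^ 2)) ∧
    (∀ p q : {p : B' × ℝ × ℝ // p.2.2 ∈ Set.Ico (0 : ℝ) n},
      Real.sqrt (dist p.1.1 q.1.1 ^ 2 + (p.1.2.1 - q.1.2.1) ^ 2 + (p.1.2.2 - q.1.2.2) ^ 2)
        = 0 → p = q) ∧
    (∀ p q r : {p : B' × ℝ × ℝ // p.2.2 ∈ Set.Ico (0 : ℝ) n},
      Real.sqrt (dist p.1.1 r.1.1 ^ 2 + (p.1.2.1 - r.1.2.1) ^ 2 + (p.1.2.2 - r.1.2.2) ^ 2) ≤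
      Real.sqrt (dist p.1.1 q.1.1 ^ 2 + (p.1.2.1 - q.1.2.1) ^ 2 + (p.1.2.2 - q.1.2.2) ^ 2) +
      Real.sqrt (dist q.1.1 r.1.1 ^ 2 + (q.1.2.1 - r.1.2.1) ^ 2 + (q.1.2.2 - r.1.2.2) ^ 2)) :=
  stmt8_general n
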